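/- For every term t over {M}, the poset of terms greater than or equal to t in the Mockingbird rewrite order is isomorphic (as a poset) to the poset of duplicative forests greater than or equal to fr(t) in the duplication order, where fr is the forest map defined on terms. -/

import Mathlib

inductive MTerm : Type
  | M : MTerm
  | var : ℕ → MTerm
  | app : MTerm → MTerm → MTerm

/-- One-step rewrite of the Mockingbird system: replace a subterm `M s` by `s s`. -/
inductive MStep : MTerm → MTerm → Prop
  | mock (s : MTerm) : MStep (.app .M s) (.app s s)
  | left {t t' : MTerm} (u : MTerm) : MStep t t' → MStep (.app t u) (.app t' u)
  | right (u : MTerm) {t t' : MTerm} : MStep t t' → MStep (.app u t) (.app u t')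

/-- Rewrite order: reflexive-transitive closure of `MStep`. -/
def MLe : MTerm → MTerm → Prop := Relation.ReflTransGen MStep

/-- A term is a combinator when it contains no variable. -/
def NoVar : MTerm → Prop
  | .M => True
  | .var _ => False
  | .app a b => NoVar a ∧ NoVar b

/-- Subterm (factor) relation. -/
inductive MSub : MTerm → MTerm → Prop
  | refl (t : MTerm) : MSub t t
  | left {s a : MTerm} (b : MTerm) : MSub s a → MSub s (.app a b)
  | right (a : MTerm) {s b : MTerm} : MSub s b → MSub s (.app a b)

/-- Height: maximal number of internal nodes on a root-to-leaf path. -/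
def ht : MTerm → ℕ
  | .M => 0
  | .var _ => 0
  | .app a b => max (ht a) (ht b) + 1

/-- Degree: number of application (internal) nodes. -/
def deg : MTerm → ℕ
  | .M => 0
  | .var _ => 0
  | .app a b => deg a + deg b + 1

mutual
  /-- A duplicative tree: a node colored white (`false`) or black (`true`) with a forest of children. -/
  inductive DTree : Type
    | node : Bool → DForest → DTree
  /-- A duplicative forest: a finite sequence of duplicative trees. -/
  inductive DForest : Type
    | nil : DForest
    | cons : DTree → DForest → DForest
end

def DForest.append : DForest → DForest → DForest
  | .nil, g => g
  | .cons t f, g => .cons t (f.append g)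

mutual
  /-- One duplication step inside a tree. -/
  inductive TStep : DTree → DTree → Prop
    | dup (c : DForest) : TStep (.node false c) (.node true (c.append c))
    | congr (b : Bool) {c c' : DForest} : FStep c c' → TStep (.node b c) (.node b c')
  /-- One duplication step inside a forest. -/
  inductive FStep : DForest → DForest → Prop
    | head {t t' : DTree} (f : DForest) : TStep t t' → FStep (.cons t f) (.cons t' f)
    | tail (t : DTree) {f f' : DForest} : FStep f f' → FStep (.cons t f) (.cons t f')
end

/-- Duplication order on forests. -/
def FLe : DForest → DForest → Prop := Relation.ReflTransGen FStep

mutual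
  /-- Number of black nodes of a tree. -/
  def DTree.black : DTree → ℕ
    | .node b c => (cond b 1 0) + DForest.black c
  /-- Number of black nodes of a forest. -/
  def DForest.black : DForest → ℕ
    | .nil => 0
    | .cons t f => DTree.black t + DForest.black f
end

/-- The forest map from Mockingbird terms to duplicative forests. -/
def fr : MTerm → DForest
  | .var _ => .nil
  | .M => .nil
  | .app .M (.var _) => .cons (.node false .nil) .nil
  | .app .M .M => .nil
  | .app .M (.app t t') => .cons (.node false (fr (.app t t'))) .nil
  | .app (.var _) t => fr t
  | .app (.app t t') t'' => (fr (.app t t')).append (fr t'')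

/-!
Both upper sets are built by induction on `t` from the same two operations. If `a ≠ M`, no
rewrite of `a b` ever happens at the root, so the terms above `a b` are the products of terms
above `a` and above `b`; dually, a forest above `f ++ g` splits uniquely (lengths are
preserved) into forests above `f` and `g`. Above `M b` lie the terms `M b'` with `b ≤ b'`
and, after the mock step at the root, the terms `c d` with `c, d ≥ b'` for a common
`b' ≥ b`; above a white tree with children `c` lie the white trees on `c' ≥ c` and the
black trees on `d₁ ++ d₂` with `d₁, d₂ ≥ c'` for a common `c' ≥ c`. The two descriptions
have the same shape, so an isomorphism of the smaller upper sets lifts to one of the larger. The leaves `M`, `x` and `M M` have one-element upper sets, like the empty forest.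
-/

open Function Relation

section Dup

variable {α β : Type*} {r : α → α → Prop} {s : β → β → Prop}

variable (r) in
/-- `inl x` plays the role of `M x` (a white tree on `x`), and `inr (c, d)` that of `c d`
(a black tree on `c ++ d`). -/
abbrev Dup : Type _ := α ⊕ {p : α × α // ∃ z, r z p.1 ∧ r z p.2}

variable (r) in
def DupRel : Dup r → Dup r → Prop
  | .inl x, .inl y => r x y
  | .inl x, .inr q => ∃ z, r x z ∧ r z q.1.1 ∧ r z q.1.2
  | .inr _, .inl _ => False
  | .inr p, .inr q => r p.1.1 q.1.1 ∧ r p.1.2 q.1.2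

def RelIso.dupCongr (e : r ≃r s) : DupRel r ≃r DupRel s where
  toEquiv := e.toEquiv.sumCongr <| (e.toEquiv.prodCongr e.toEquiv).subtypeEquiv fun p => by
    simp [e.surjective.exists, e.map_rel_iff]
  map_rel_iff' := by
    rintro (x | ⟨⟨c, d⟩, _⟩) (y | ⟨⟨c', d'⟩, _⟩) <;>
      simp [DupRel, e.surjective.exists, e.map_rel_iff]

end Dup

theorem Prod.rProd_iff {α β : Type*} {r : α → α → Prop} {s : β → β → Prop} {p q : α × β} :
    Prod.RProd r s p q ↔ r p.1 q.1 ∧ s p.2 q.2 :=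
  ⟨fun ⟨h₁, h₂⟩ => ⟨h₁, h₂⟩, fun ⟨h₁, h₂⟩ => ⟨h₁, h₂⟩⟩

def RelIso.rProdCongr {α₁ α₂ β₁ β₂ : Type*} {r₁ : α₁ → α₁ → Prop} {r₂ : α₂ → α₂ → Prop}
    {s₁ : β₁ → β₁ → Prop} {s₂ : β₂ → β₂ → Prop} (e₁ : r₁ ≃r s₁) (e₂ : r₂ ≃r s₂) :
    Prod.RProd r₁ r₂ ≃r Prod.RProd s₁ s₂ where
  toEquiv := e₁.toEquiv.prodCongr e₂.toEquiv
  map_rel_iff' := by simp [Prod.rProd_iff, e₁.map_rel_iff, e₂.map_rel_iff]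

theorem MStep.ne_M {u v : MTerm} (h : MStep u v) : v ≠ .M := by
  cases h <;> nofun

theorem MLe.ne_M {u v : MTerm} (hu : u ≠ .M) (h : MLe u v) : v ≠ .M := by
  induction h with
  | refl => exact hu
  | tail _ hs _ => exact hs.ne_M

theorem MLe.app {a a' b b' : MTerm} (ha : MLe a a') (hb : MLe b b') :
    MLe (.app a b) (.app a' b') :=
  ReflTransGen.trans (ha.lift (MTerm.app · b) fun _ _ => MStep.left b)
    (hb.lift (MTerm.app a' ·) fun _ _ => MStep.right a')

theorem MLe.eq_of_forall_mStep {t u : MTerm} (ht : ∀ v, MStep t v → v = t) (h : MLe t u) :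
    u = t := by
  induction h with
  | refl => rfl
  | tail _ hs ih => subst ih; exact ht _ hs

theorem MLe.M_app_app_of_le {b z c d : MTerm} (hz : MLe b z) (hc : MLe z c) (hd : MLe z d) :
    MLe (.app .M b) (.app c d) :=
  ((MLe.app .refl hz).tail (.mock z)).trans (hc.app hd)

theorem mLe_app_iff {a b u : MTerm} (ha : a ≠ .M) :
    MLe (.app a b) u ↔ ∃ a' b', u = .app a' b' ∧ MLe a a' ∧ MLe b b' := by
  refine ⟨fun h => ?_, fun ⟨a', b', hu, ha', hb'⟩ => hu ▸ ha'.app hb'⟩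
  induction h with
  | refl => exact ⟨a, b, rfl, .refl, .refl⟩
  | tail _ hs ih =>
    obtain ⟨a', b', rfl, ha', hb'⟩ := ih
    cases hs with
    | mock => exact absurd rfl (ha'.ne_M ha)
    | left _ hs => exact ⟨_, _, rfl, ha'.tail hs, hb'⟩
    | right _ hs => exact ⟨_, _, rfl, ha', hb'.tail hs⟩

theorem mLe_M_app_iff {b u : MTerm} (hb : b ≠ .M) :
    MLe (.app .M b) u ↔ (∃ b', u = .app .M b' ∧ MLe b b') ∨
      ∃ z c d, u = .app c d ∧ MLe b z ∧ MLe z c ∧ MLe z d := by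
  refine ⟨fun h => ?_, ?_⟩
  · induction h with
    | refl => exact .inl ⟨b, rfl, .refl⟩
    | tail _ hs ih =>
      rcases ih with ⟨b', rfl, hb'⟩ | ⟨z, c, d, rfl, hz, hc, hd⟩
      · cases hs with
        | mock => exact .inr ⟨b', b', b', rfl, hb', .refl, .refl⟩
        | left _ hs => cases hs
        | right _ hs => exact .inl ⟨_, rfl, hb'.tail hs⟩
      · cases hs with
        | mock => exact absurd rfl (MLe.ne_M hb (hz.trans hc))
        | left _ hs => exact .inr ⟨z, _, d, rfl, hz, hc.tail hs, hd⟩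
        | right _ hs => exact .inr ⟨z, c, _, rfl, hz, hc, hd.tail hs⟩
  · rintro (⟨b', rfl, hb'⟩ | ⟨z, c, d, rfl, hz, hc, hd⟩)
    · exact MLe.app .refl hb'
    · exact hz.M_app_app_of_le hc hd

theorem mLe_app_app_iff {a b a' b' : MTerm} (ha : a ≠ .M) :
    MLe (.app a b) (.app a' b') ↔ MLe a a' ∧ MLe b b' := by
  simp [mLe_app_iff ha]

theorem mLe_M_app_M_app_iff {b b' : MTerm} (hb : b ≠ .M) :
    MLe (.app .M b) (.app .M b') ↔ MLe b b' := by
  rw [mLe_M_app_iff hb]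
  constructor
  · rintro (⟨_, ⟨⟩, h⟩ | ⟨z, _, _, ⟨⟩, hz, hc, -⟩)
    · exact h
    · exact absurd rfl (MLe.ne_M hb (hz.trans hc))
  · exact fun h => .inl ⟨b', rfl, h⟩

theorem mLe_M_app_app_iff {b c d : MTerm} (hb : b ≠ .M) (hc : c ≠ .M) :
    MLe (.app .M b) (.app c d) ↔ ∃ z, MLe b z ∧ MLe z c ∧ MLe z d := by
  rw [mLe_M_app_iff hb]
  constructor
  · rintro (⟨_, ⟨⟩, -⟩ | ⟨z, _, _, ⟨⟩, h⟩)
    · exact absurd rfl hc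
    · exact ⟨z, h⟩
  · exact fun ⟨z, h⟩ => .inr ⟨z, c, d, rfl, h⟩

theorem not_mLe_app_M_app {c d b : MTerm} (hc : c ≠ .M) : ¬ MLe (.app c d) (.app .M b) := by
  rw [mLe_app_iff hc]
  rintro ⟨_, _, ⟨⟩, h, -⟩
  exact h.ne_M hc rfl

def DForest.len : DForest → ℕ
  | .nil => 0
  | .cons _ f => f.len + 1

abbrev DForest.single (b : Bool) (c : DForest) : DForest := .cons (.node b c) .nil

theorem DForest.append_inj : ∀ {f₁ f₂ g₁ g₂ : DForest}, f₁.len = f₂.len →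
    f₁.append g₁ = f₂.append g₂ → f₁ = f₂ ∧ g₁ = g₂
  | .nil, .nil, _, _, _, h => ⟨rfl, h⟩
  | .cons _ _, .cons _ _, _, _, hl, h => by
    simp only [DForest.append, DForest.cons.injEq] at h
    obtain ⟨h₁, h₂⟩ := DForest.append_inj (by simpa [DForest.len] using hl) h.2
    exact ⟨by rw [h.1, h₁], h₂⟩

theorem FStep.len_eq : ∀ {f g : DForest}, FStep f g → f.len = g.len
  | _, _, .head _ _ => rfl
  | _, _, .tail _ h => congrArg (· + 1) h.len_eq

theorem FLe.len_eq {f g : DForest} (h : FLe f g) : f.len = g.len := by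
  induction h with
  | refl => rfl
  | tail _ hs ih => exact ih.trans hs.len_eq

theorem FLe.eq_nil {g : DForest} (h : FLe .nil g) : g = .nil := by
  induction h with
  | refl => rfl
  | tail _ hs ih => subst ih; cases hs

theorem FStep.append_left : ∀ {f f' : DForest} (g : DForest), FStep f f' →
    FStep (f.append g) (f'.append g)
  | _, _, _, .head _ h => .head _ h
  | _, _, g, .tail _ h => .tail _ (h.append_left g)

theorem FStep.append_right : ∀ (f : DForest) {g g' : DForest}, FStep g g' →
    FStep (f.append g) (f.append g')
  | .nil, _, _, h => h
  | .cons _ f, _, _, h => .tail _ (FStep.append_right f h)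

theorem FStep.of_append : ∀ {f g h : DForest}, FStep (f.append g) h →
    (∃ f', h = f'.append g ∧ FStep f f') ∨ ∃ g', h = f.append g' ∧ FStep g g'
  | .nil, _, _, hs => .inr ⟨_, rfl, hs⟩
  | .cons _ _, _, _, .head _ ht => .inl ⟨_, rfl, .head _ ht⟩
  | .cons _ _, _, _, .tail _ hs => by
    rcases FStep.of_append hs with ⟨f', rfl, h⟩ | ⟨g', rfl, h⟩
    · exact .inl ⟨_, rfl, .tail _ h⟩
    · exact .inr ⟨g', rfl, h⟩

theorem FLe.append {f f' g g' : DForest} (hf : FLe f f') (hg : FLe g g') :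
    FLe (f.append g) (f'.append g') :=
  ReflTransGen.trans (hf.lift (DForest.append · g) fun _ _ => FStep.append_left g)
    (hg.lift (DForest.append f' ·) fun _ _ => FStep.append_right f')

theorem FLe.single {b : Bool} {c c' : DForest} (h : FLe c c') :
    FLe (.single b c) (.single b c') :=
  h.lift (DForest.single b) fun _ _ hs => .head _ (.congr b hs)

theorem FLe.white_black_of_le {c z d₁ d₂ : DForest} (hz : FLe c z) (h₁ : FLe z d₁)
    (h₂ : FLe z d₂) :
    FLe (.single false c) (.single true (d₁.append d₂)) :=
  ((FLe.single hz).tail (.head _ (.dup z))).trans (FLe.single (h₁.append h₂))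

theorem fLe_append_iff {f g h : DForest} :
    FLe (f.append g) h ↔ ∃ f' g', h = f'.append g' ∧ FLe f f' ∧ FLe g g' := by
  refine ⟨fun hle => ?_, fun ⟨f', g', hh, hf, hg⟩ => hh ▸ hf.append hg⟩
  induction hle with
  | refl => exact ⟨f, g, rfl, .refl, .refl⟩
  | tail _ hs ih =>
    obtain ⟨f', g', rfl, hf, hg⟩ := ih
    rcases hs.of_append with ⟨f'', rfl, hf'⟩ | ⟨g'', rfl, hg'⟩
    · exact ⟨f'', g', rfl, hf.tail hf', hg⟩
    · exact ⟨f', g'', rfl, hf, hg.tail hg'⟩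

theorem fLe_append_append_iff {f g f' g' : DForest} (hlen : f.len = f'.len) :
    FLe (f.append g) (f'.append g') ↔ FLe f f' ∧ FLe g g' := by
  rw [fLe_append_iff]
  constructor
  · rintro ⟨f'', g'', he, hf, hg⟩
    obtain ⟨rfl, rfl⟩ := DForest.append_inj (hlen.symm.trans hf.len_eq) he
    exact ⟨hf, hg⟩
  · exact fun ⟨hf, hg⟩ => ⟨f', g', rfl, hf, hg⟩

theorem fLe_black_iff {d g : DForest} :
    FLe (.single true d) g ↔ ∃ d', g = .single true d' ∧ FLe d d' := by
  refine ⟨fun h => ?_, fun ⟨d', hg, hd⟩ => hg ▸ hd.single⟩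
  induction h with
  | refl => exact ⟨d, rfl, .refl⟩
  | tail _ hs ih =>
    obtain ⟨d', rfl, hd⟩ := ih
    rcases hs with ⟨_, _ | ⟨_, hs⟩⟩ | ⟨_, ⟨⟩⟩
    exact ⟨_, rfl, hd.tail hs⟩

theorem fLe_white_iff {c g : DForest} :
    FLe (.single false c) g ↔ (∃ c', g = .single false c' ∧ FLe c c') ∨
      ∃ z d₁ d₂, g = .single true (d₁.append d₂) ∧ FLe c z ∧ FLe z d₁ ∧ FLe z d₂ := by
  refine ⟨fun h => ?_, ?_⟩
  · induction h with
    | refl => exact .inl ⟨c, rfl, .refl⟩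
    | tail _ hs ih =>
      rcases ih with ⟨c', rfl, hc⟩ | ⟨z, d₁, d₂, rfl, hz, h₁, h₂⟩
      · rcases hs with ⟨_, _ | ⟨_, hs⟩⟩ | ⟨_, ⟨⟩⟩
        · exact .inr ⟨c', c', c', rfl, hc, .refl, .refl⟩
        · exact .inl ⟨_, rfl, hc.tail hs⟩
      · rcases hs with ⟨_, _ | ⟨_, hs⟩⟩ | ⟨_, ⟨⟩⟩
        rcases hs.of_append with ⟨d', rfl, hd⟩ | ⟨d', rfl, hd⟩
        · exact .inr ⟨z, d', d₂, rfl, hz, h₁.tail hd, h₂⟩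
        · exact .inr ⟨z, d₁, d', rfl, hz, h₁, h₂.tail hd⟩
  · rintro (⟨c', rfl, hc⟩ | ⟨z, d₁, d₂, rfl, hz, h₁, h₂⟩)
    · exact hc.single
    · exact hz.white_black_of_le h₁ h₂

theorem fLe_white_white_iff {c c' : DForest} :
    FLe (.single false c) (.single false c') ↔ FLe c c' := by
  rw [fLe_white_iff]
  constructor
  · rintro (⟨_, ⟨⟩, h⟩ | ⟨_, _, _, ⟨⟩, -⟩)
    exact h
  · exact fun h => .inl ⟨c', rfl, h⟩

theorem fLe_white_black_iff {c d₁ d₂ : DForest} (hlen : c.len = d₁.len) :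
    FLe (.single false c) (.single true (d₁.append d₂)) ↔
      ∃ z, FLe c z ∧ FLe z d₁ ∧ FLe z d₂ := by
  rw [fLe_white_iff]
  constructor
  · rintro (⟨_, ⟨⟩, -⟩ | ⟨z, e₁, e₂, he, hz, h₁, h₂⟩)
    simp only [DForest.cons.injEq, DTree.node.injEq, true_and, and_true] at he
    obtain ⟨rfl, rfl⟩ := DForest.append_inj (hlen.symm.trans (hz.len_eq.trans h₁.len_eq)) he
    exact ⟨z, hz, h₁, h₂⟩
  · exact fun ⟨z, h⟩ => .inr ⟨z, d₁, d₂, rfl, h⟩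

theorem fLe_black_black_iff {d d' : DForest} :
    FLe (.single true d) (.single true d') ↔ FLe d d' := by
  simp [fLe_black_iff]

theorem not_fLe_black_white {d c : DForest} : ¬ FLe (.single true d) (.single false c) := by
  rw [fLe_black_iff]
  rintro ⟨_, ⟨⟩, -⟩

abbrev MLeAbove (t : MTerm) := Subrel MLe (MLe t)

abbrev FLeAbove (f : DForest) := Subrel FLe (FLe f)

section MockOfDup

variable {b : MTerm}

def mockOfDup : Dup (MLeAbove b) → {u // MLe (.app .M b) u}
  | .inl x => ⟨.app .M x.1, MLe.app .refl x.2⟩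
  | .inr ⟨(c, d), hz⟩ => ⟨.app c.1 d.1, hz.elim fun z ⟨hc, hd⟩ => z.2.M_app_app_of_le hc hd⟩

theorem mockOfDup_injective (hb : b ≠ .M) : Injective (mockOfDup (b := b)) := by
  rintro (x | ⟨⟨c, d⟩, z, hc, _⟩) (y | ⟨⟨c', d'⟩, z', hc', _⟩) h <;>
    simp only [mockOfDup, Subtype.mk.injEq, MTerm.app.injEq, true_and] at h
  · rw [Subtype.ext h]
  · exact absurd h.1.symm (MLe.ne_M hb (z'.2.trans hc'))
  · exact absurd h.1 (MLe.ne_M hb (z.2.trans hc))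
  · obtain ⟨h₁, h₂⟩ := h
    obtain rfl := Subtype.ext h₁
    obtain rfl := Subtype.ext h₂
    rfl

theorem mockOfDup_surjective (hb : b ≠ .M) : Surjective (mockOfDup (b := b)) := by
  rintro ⟨u, hu⟩
  rcases (mLe_M_app_iff hb).1 hu with ⟨b', rfl, hb'⟩ | ⟨z, c, d, rfl, hz, hc, hd⟩
  · exact ⟨.inl ⟨b', hb'⟩, rfl⟩
  · exact ⟨.inr ⟨(⟨c, hz.trans hc⟩, ⟨d, hz.trans hd⟩), ⟨z, hz⟩, hc, hd⟩, rfl⟩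

theorem mockOfDup_le_iff (hb : b ≠ .M) (p q : Dup (MLeAbove b)) :
    MLe (mockOfDup p).1 (mockOfDup q).1 ↔ DupRel (MLeAbove b) p q := by
  rcases p with x | ⟨⟨c, d⟩, z, hc, -⟩ <;> rcases q with y | ⟨⟨c', d'⟩, z', hc', -⟩
  · exact mLe_M_app_M_app_iff (MLe.ne_M hb x.2)
  · refine (mLe_M_app_app_iff (MLe.ne_M hb x.2) (MLe.ne_M hb (z'.2.trans hc'))).trans ?_
    exact ⟨fun ⟨w, h⟩ => ⟨⟨w, x.2.trans h.1⟩, h⟩, fun ⟨w, h⟩ => ⟨w, h⟩⟩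
  · exact iff_of_false (not_mLe_app_M_app (MLe.ne_M hb (z.2.trans hc))) id
  · exact mLe_app_app_iff (MLe.ne_M hb (z.2.trans hc))

noncomputable def dupRelIsoMLeAboveMApp (hb : b ≠ .M) :
    DupRel (MLeAbove b) ≃r MLeAbove (.app .M b) :=
  .ofSurjective ⟨⟨mockOfDup, mockOfDup_injective hb⟩, mockOfDup_le_iff hb _ _⟩
    (mockOfDup_surjective hb)

end MockOfDup

noncomputable def rProdRelIsoMLeAboveApp {a b : MTerm} (ha : a ≠ .M) :
    Prod.RProd (MLeAbove a) (MLeAbove b) ≃r MLeAbove (.app a b) :=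
  .ofSurjective
    { toFun p := ⟨.app p.1.1 p.2.1, p.1.2.app p.2.2⟩
      inj' := fun p q h => by
        simp only [Subtype.mk.injEq, MTerm.app.injEq] at h
        exact Prod.ext (Subtype.ext h.1) (Subtype.ext h.2)
      map_rel_iff' {p q} := by
        rw [Prod.rProd_iff]
        exact mLe_app_app_iff (MLe.ne_M ha p.1.2) }
    fun ⟨u, hu⟩ => by
      obtain ⟨a', b', rfl, ha', hb'⟩ := (mLe_app_iff ha).1 hu
      exact ⟨(⟨a', ha'⟩, ⟨b', hb'⟩), rfl⟩

noncomputable def rProdRelIsoFLeAboveAppend (f g : DForest) :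
    Prod.RProd (FLeAbove f) (FLeAbove g) ≃r FLeAbove (f.append g) :=
  .ofSurjective
    { toFun p := ⟨p.1.1.append p.2.1, p.1.2.append p.2.2⟩
      inj' := fun p q h => by
        obtain ⟨h₁, h₂⟩ := DForest.append_inj (p.1.2.len_eq.symm.trans q.1.2.len_eq)
          (congrArg Subtype.val h)
        exact Prod.ext (Subtype.ext h₁) (Subtype.ext h₂)
      map_rel_iff' {p q} := by
        rw [Prod.rProd_iff]
        exact fLe_append_append_iff (p.1.2.len_eq.symm.trans q.1.2.len_eq) }
    fun ⟨k, hk⟩ => by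
      obtain ⟨f', g', rfl, hf, hg⟩ := fLe_append_iff.1 hk
      exact ⟨(⟨f', hf⟩, ⟨g', hg⟩), rfl⟩

section WhiteOfDup

variable {c : DForest}

def whiteOfDup : Dup (FLeAbove c) → {g // FLe (.single false c) g}
  | .inl x => ⟨.single false x.1, x.2.single⟩
  | .inr ⟨(d₁, d₂), hz⟩ =>
    ⟨.single true (d₁.1.append d₂.1), hz.elim fun z ⟨h₁, h₂⟩ => z.2.white_black_of_le h₁ h₂⟩

theorem whiteOfDup_injective : Injective (whiteOfDup (c := c)) := by
  rintro (x | ⟨⟨d₁, d₂⟩, _⟩) (y | ⟨⟨e₁, e₂⟩, _⟩) h <;>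
    simp only [whiteOfDup, Subtype.mk.injEq, DForest.cons.injEq, DTree.node.injEq,
      Bool.false_eq_true, Bool.true_eq_false, false_and, true_and, and_true] at h
  · rw [Subtype.ext h]
  · obtain ⟨h₁, h₂⟩ := DForest.append_inj (d₁.2.len_eq.symm.trans e₁.2.len_eq) h
    obtain rfl := Subtype.ext h₁
    obtain rfl := Subtype.ext h₂
    rfl

theorem whiteOfDup_surjective : Surjective (whiteOfDup (c := c)) := by
  rintro ⟨g, hg⟩
  rcases fLe_white_iff.1 hg with ⟨c', rfl, hc⟩ | ⟨z, d₁, d₂, rfl, hz, h₁, h₂⟩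
  · exact ⟨.inl ⟨c', hc⟩, rfl⟩
  · exact ⟨.inr ⟨(⟨d₁, hz.trans h₁⟩, ⟨d₂, hz.trans h₂⟩), ⟨z, hz⟩, h₁, h₂⟩, rfl⟩

theorem whiteOfDup_le_iff (p q : Dup (FLeAbove c)) :
    FLe (whiteOfDup p).1 (whiteOfDup q).1 ↔ DupRel (FLeAbove c) p q := by
  rcases p with x | ⟨⟨d₁, d₂⟩, _⟩ <;> rcases q with y | ⟨⟨e₁, e₂⟩, _⟩
  · exact fLe_white_white_iff
  · refine (fLe_white_black_iff (x.2.len_eq.symm.trans e₁.2.len_eq)).trans ?_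
    exact ⟨fun ⟨w, h⟩ => ⟨⟨w, x.2.trans h.1⟩, h⟩, fun ⟨w, h⟩ => ⟨w, h⟩⟩
  · exact iff_of_false not_fLe_black_white id
  · exact fLe_black_black_iff.trans
      (fLe_append_append_iff (d₁.2.len_eq.symm.trans e₁.2.len_eq))

noncomputable def dupRelIsoFLeAboveWhite (c : DForest) :
    DupRel (FLeAbove c) ≃r FLeAbove (.single false c) :=
  .ofSurjective ⟨⟨whiteOfDup, whiteOfDup_injective⟩, whiteOfDup_le_iff _ _⟩ whiteOfDup_surjective

end WhiteOfDup

theorem fr_M_app {b : MTerm} (hb : b ≠ .M) : fr (.app .M b) = .single false (fr b) := by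
  cases b <;> first | rfl | contradiction

theorem fr_app {a b : MTerm} (ha : a ≠ .M) : fr (.app a b) = (fr a).append (fr b) := by
  cases a <;> first | rfl | contradiction

theorem nonempty_relIso_fr_of_forall_mStep_eq {t : MTerm} (ht : ∀ v, MStep t v → v = t)
    (hf : fr t = .nil) : Nonempty (MLeAbove t ≃r FLeAbove (fr t)) := by
  rw [hf]
  have hu (u : {u // MLe t u}) : u.1 = t := u.2.eq_of_forall_mStep ht
  refine ⟨.ofSurjective ⟨⟨fun _ => ⟨.nil, .refl⟩, fun u v _ => ?_⟩, fun {u v} => ?_⟩ ?_⟩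
  · exact Subtype.ext ((hu u).trans (hu v).symm)
  · refine iff_of_true .refl ?_
    change MLe u.1 v.1
    rw [hu u, hu v]
    exact .refl
  · exact fun g => ⟨⟨t, .refl⟩, Subtype.ext g.2.eq_nil.symm⟩

theorem nonempty_relIso_fr_M_app {b : MTerm} (hb : b ≠ .M)
    (h : Nonempty (MLeAbove b ≃r FLeAbove (fr b))) :
    Nonempty (MLeAbove (.app .M b) ≃r FLeAbove (fr (.app .M b))) := by
  obtain ⟨e⟩ := h
  rw [fr_M_app hb]
  exact ⟨(dupRelIsoMLeAboveMApp hb).symm.trans (e.dupCongr.trans (dupRelIsoFLeAboveWhite _))⟩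

theorem nonempty_relIso_fr_app {a b : MTerm} (ha : a ≠ .M)
    (ha' : Nonempty (MLeAbove a ≃r FLeAbove (fr a)))
    (hb' : Nonempty (MLeAbove b ≃r FLeAbove (fr b))) :
    Nonempty (MLeAbove (.app a b) ≃r FLeAbove (fr (.app a b))) := by
  obtain ⟨ea⟩ := ha'
  obtain ⟨eb⟩ := hb'
  rw [fr_app ha]
  exact ⟨(rProdRelIsoMLeAboveApp ha).symm.trans
    ((ea.rProdCongr eb).trans (rProdRelIsoFLeAboveAppend _ _))⟩

theorem nonempty_relIso_fr : ∀ t : MTerm, Nonempty (MLeAbove t ≃r FLeAbove (fr t))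
  | .M => nonempty_relIso_fr_of_forall_mStep_eq (by nofun) rfl
  | .var _ => nonempty_relIso_fr_of_forall_mStep_eq (by nofun) rfl
  | .app .M .M =>
    nonempty_relIso_fr_of_forall_mStep_eq (by rintro _ (_ | ⟨_, ⟨⟩⟩ | ⟨_, ⟨⟩⟩); rfl) rfl
  | .app .M (.var i) => nonempty_relIso_fr_M_app nofun (nonempty_relIso_fr (.var i))
  | .app .M (.app b c) => nonempty_relIso_fr_M_app nofun (nonempty_relIso_fr (.app b c))
  | .app (.var i) b =>
    nonempty_relIso_fr_app nofun (nonempty_relIso_fr (.var i)) (nonempty_relIso_fr b)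
  | .app (.app a a') b =>
    nonempty_relIso_fr_app nofun (nonempty_relIso_fr (.app a a')) (nonempty_relIso_fr b)

/-- For every term t over {M}, the poset of terms above t in the Mockingbird rewrite
order is isomorphic to the poset of duplicative forests above fr(t) in the duplication
order. -/
theorem mockingbird_forest_iso (t : MTerm) :
    ∃ e : {u : MTerm // MLe t u} ≃ {g : DForest // FLe (fr t) g},
      ∀ a b : {u : MTerm // MLe t u}, MLe a.1 b.1 ↔ FLe (e a).1 (e b).1 := by
  obtain ⟨e⟩ := nonempty_relIso_fr t
  exact ⟨e.toEquiv, fun a b => e.map_rel_iff.symm⟩
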